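/- arXiv:2011.14071 — 3 statements merged into one kernel-verified Lean document; each statement's English description precedes it below -/
import Mathlib

section
/- Let G be a finite group and p a prime such that [Z(C(x)) : Z(G)] = p for every non-central x ∈ G. Then G is an F-group, G/Z(G) has exponent p, and if [G : Z(G)] = p^k then |Cent(G)| = (p^k − 1)/(p − 1) + 1. -/
/-- The set of element centralizers of `G`. -/
def cent (G : Type*) [Group G] : Set (Subgroup G) :=
  Set.range fun x : G => Subgroup.centralizer {x}

/-- The number of distinct element centralizers of `G`. -/
noncomputable def numCent (G : Type*) [Group G] : ℕ := (cent G).ncard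

/-- The center of the centralizer `C(x)`, viewed as a subgroup of `G`. -/
def centerCentralizer {G : Type*} [Group G] (x : G) : Subgroup G :=
  Subgroup.centralizer {x} ⊓
    Subgroup.centralizer ((Subgroup.centralizer {x} : Subgroup G) : Set G)

/-- `G` is an F-group: for non-central `x, y`, `C(x) ≤ C(y)` implies `C(x) = C(y)`. -/
def IsFGroup (G : Type*) [Group G] : Prop :=
  ∀ x y : G, x ∉ Subgroup.center G → y ∉ Subgroup.center G →
    Subgroup.centralizer {x} ≤ Subgroup.centralizer {y} →
    Subgroup.centralizer ({x} : Set G) = Subgroup.centralizer {y}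

/-- The set of conjugates of a subgroup `H` of `G`. -/
def conjugates {G : Type*} [Group G] (H : Subgroup G) : Set (Subgroup G) :=
  {K | ∃ g : G, K = Subgroup.map (MulAut.conj g).toMonoidHom H}

/-- The number of `z`-classes of `G`: elements are `z`-equivalent when their
centralizers are conjugate in `G`, so the number of `z`-classes is the number of
distinct conjugacy classes of element centralizers. -/
noncomputable def numZClasses (G : Type*) [Group G] : ℕ :=
  (Set.range fun x : G => conjugates (Subgroup.centralizer {x})).ncard

/-!
Write `Q = G ⧸ Z(G)`. For non-central `x`, the image of `Z(C(x))` in `Q` has prime order `p` and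
contains `xZ`, so it equals `⟨xZ⟩` and `xZ` has order `p`. Since `y ∈ Z(C(x))` iff
`C(x) ≤ C(y)`, and `C(x)` is the centralizer of the preimage of `⟨xZ⟩`, the proper element
centralizers correspond bijectively to the subgroups of order `p` of `Q`. Each of these contains
`p - 1` non-identity elements, which gives the count.
-/

open Subgroup QuotientGroup Finset

lemma zpowers_eq_of_mem_of_card_prime {Q : Type*} [Group Q] {H : Subgroup Q} {p : ℕ}
    (hp : p.Prime) (hH : Nat.card H = p) {a : Q} (ha : a ∈ H) (ha1 : a ≠ 1) :
    zpowers a = H := by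
  have : Finite H := Nat.finite_of_card_ne_zero (hH ▸ hp.ne_zero)
  have hle : zpowers a ≤ H := zpowers_le.mpr ha
  refine eq_of_le_of_card_ge hle ?_
  rcases (Nat.dvd_prime hp).mp (hH ▸ card_dvd_of_le hle) with h1 | hp'
  · exact absurd (zpowers_eq_bot.mp (card_eq_one.mp h1)) ha1
  · exact (hH.trans hp'.symm).le

lemma ncard_image_zpowers_mul {Q : Type*} [Group Q] [Finite Q] {p : ℕ} (hp : p.Prime)
    (h : ∀ a : Q, a ≠ 1 → orderOf a = p) :
    (zpowers '' ({1}ᶜ : Set Q)).ncard * (p - 1) = Nat.card Q - 1 := by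
  classical
  have : Fintype Q := Fintype.ofFinite Q
  have hfiber : ∀ H ∈ ({1}ᶜ : Finset Q).image zpowers,
      #{b ∈ ({1}ᶜ : Finset Q) | zpowers b = H} = p - 1 := by
    simp only [mem_image, mem_compl, mem_singleton]
    rintro _ ⟨a, ha, rfl⟩
    have hcard : Nat.card (zpowers a) = p := by rw [Nat.card_zpowers, h a ha]
    have : {b ∈ ({1}ᶜ : Finset Q) | zpowers b = zpowers a} =
        (zpowers a : Set Q).toFinset.erase 1 := by
      ext b
      simp only [mem_filter, mem_compl, mem_singleton, mem_erase, Set.mem_toFinset,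
        SetLike.mem_coe]
      exact ⟨fun ⟨hb, hba⟩ => ⟨hb, hba ▸ mem_zpowers b⟩,
        fun ⟨hb, hba⟩ => ⟨hb, zpowers_eq_of_mem_of_card_prime hp hcard hba hb⟩⟩
    rw [this, card_erase_of_mem (by simp), ← Nat.card_eq_card_toFinset, SetLike.coe_sort_coe,
      hcard]
  have hcompl : #({1}ᶜ : Finset Q) = Fintype.card Q - 1 := by rw [card_compl, card_singleton]
  rw [Set.ncard_eq_toFinset_card', Set.toFinset_image, Set.toFinset_compl,
    Set.toFinset_singleton, Nat.card_eq_fintype_card, ← hcompl,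
    card_eq_sum_card_image zpowers ({1}ᶜ : Finset Q), sum_congr rfl hfiber, sum_const,
    smul_eq_mul]


section Centralizers

variable {G : Type*} [Group G]

lemma mem_centerCentralizer_iff {x y : G} :
    y ∈ centerCentralizer x ↔ centralizer {x} ≤ centralizer {y} := by
  have hcomm : y ∈ centralizer (centralizer {x} : Set G) ↔
      centralizer {x} ≤ centralizer {y} := by
    simp only [SetLike.le_def, SetLike.mem_coe, mem_centralizer_iff, Set.mem_singleton_iff,
      forall_eq]
    exact forall₂_congr fun _ _ => eq_comm
  refine ⟨fun hy => hcomm.mp hy.2, fun hle => ⟨?_, hcomm.mpr hle⟩⟩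
  have hxy := hcomm.mpr hle x (mem_centralizer_singleton_iff.mpr rfl)
  exact mem_centralizer_singleton_iff.mpr hxy.symm

def centralizerPreimage (H : Subgroup (G ⧸ center G)) : Subgroup G :=
  centralizer (comap (mk' (center G)) H : Set G)

lemma centralizerPreimage_zpowers_mk (x : G) :
    centralizerPreimage (zpowers (x : G ⧸ center G)) = centralizer {x} := by
  have hpre : comap (mk' (center G)) (zpowers (x : G ⧸ center G)) =
      closure ({x} ∪ center G) := by
    rw [← mk'_apply, ← MonoidHom.map_zpowers, comap_map_eq, ker_mk', zpowers_eq_closure,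
      Subgroup.closure_union, closure_eq]
  rw [centralizerPreimage, hpre, centralizer_closure]
  ext g
  simp only [Set.singleton_union, mem_centralizer_iff, Set.mem_insert_iff, SetLike.mem_coe,
    or_imp, forall_and, forall_eq, Set.mem_singleton_iff, and_iff_left_iff_imp]
  exact fun _ z hz => (mem_center_iff.mp hz g).symm

lemma centralizer_le_of_mk_mem_zpowers {x y : G}
    (h : (y : G ⧸ center G) ∈ zpowers (x : G ⧸ center G)) :
    centralizer {x} ≤ centralizer {y} := by
  rw [← centralizerPreimage_zpowers_mk x, ← centralizerPreimage_zpowers_mk y]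
  exact centralizer_le (comap_mono (zpowers_le.mpr h))

lemma centralizer_singleton_eq_top_iff {x : G} : centralizer {x} = ⊤ ↔ x ∈ center G := by
  rw [centralizer_eq_top_iff_subset, Set.singleton_subset_iff, SetLike.mem_coe]

lemma cent_eq_insert_top :
    cent G = insert ⊤ (centralizerPreimage '' (zpowers '' ({1}ᶜ : Set (G ⧸ center G)))) := by
  ext K
  simp only [cent, Set.mem_range, Set.mem_insert_iff, Set.mem_image, Set.mem_compl_singleton_iff]
  constructor
  · rintro ⟨x, rfl⟩
    by_cases hx : x ∈ center G
    · exact .inl (centralizer_singleton_eq_top_iff.mpr hx)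
    · exact .inr ⟨_, ⟨x, (eq_one_iff x).not.mpr hx, rfl⟩, centralizerPreimage_zpowers_mk x⟩
  · rintro (rfl | ⟨_, ⟨a, -, rfl⟩, rfl⟩)
    · exact ⟨1, centralizer_singleton_eq_top_iff.mpr (one_mem _)⟩
    · obtain ⟨x, rfl⟩ := mk_surjective a
      exact ⟨x, (centralizerPreimage_zpowers_mk x).symm⟩

lemma top_notMem_image_centralizerPreimage :
    ⊤ ∉ centralizerPreimage '' (zpowers '' ({1}ᶜ : Set (G ⧸ center G))) := by
  rintro ⟨_, ⟨a, ha, rfl⟩, htop⟩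
  obtain ⟨x, rfl⟩ := mk_surjective a
  rw [centralizerPreimage_zpowers_mk, centralizer_singleton_eq_top_iff] at htop
  exact ha ((eq_one_iff x).mpr htop)

lemma map_centerCentralizer_eq_zpowers {p : ℕ} (hp : p.Prime) {x : G} (hx : x ∉ center G)
    (hrel : (center G).relIndex (centerCentralizer x) = p) :
    (centerCentralizer x).map (mk' (center G)) = zpowers (x : G ⧸ center G) := by
  have hcard : Nat.card ((centerCentralizer x).map (mk' (center G))) = p := by
    rw [← relIndex_ker, ker_mk', hrel]
  refine (zpowers_eq_of_mem_of_card_prime hp hcard ?_ ((eq_one_iff x).not.mpr hx)).symm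
  exact mem_map_of_mem _ (mem_centerCentralizer_iff.mpr le_rfl)

lemma orderOf_mk_eq {p : ℕ} (hp : p.Prime) {x : G} (hx : x ∉ center G)
    (hrel : (center G).relIndex (centerCentralizer x) = p) :
    orderOf (x : G ⧸ center G) = p := by
  rw [← Nat.card_zpowers, ← map_centerCentralizer_eq_zpowers hp hx hrel, ← relIndex_ker,
    ker_mk', hrel]

lemma zpowers_mk_eq_of_centralizer_le {p : ℕ} (hp : p.Prime) {x y : G} (hx : x ∉ center G)
    (hy : y ∉ center G) (hrel : (center G).relIndex (centerCentralizer x) = p)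
    (hle : centralizer {x} ≤ centralizer {y}) :
    zpowers (y : G ⧸ center G) = zpowers (x : G ⧸ center G) := by
  have hmem : (y : G ⧸ center G) ∈ zpowers (x : G ⧸ center G) :=
    map_centerCentralizer_eq_zpowers hp hx hrel ▸
      mem_map_of_mem _ (mem_centerCentralizer_iff.mpr hle)
  refine zpowers_eq_of_mem_of_card_prime hp ?_ hmem ((eq_one_iff y).not.mpr hy)
  rw [Nat.card_zpowers, orderOf_mk_eq hp hx hrel]

end Centralizers

section RelIndexPrime

variable {G : Type*} [Group G] {p : ℕ}

lemma isFGroup_of_relIndex_eq_prime (hp : p.Prime)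
    (h : ∀ x : G, x ∉ center G → (center G).relIndex (centerCentralizer x) = p) :
    IsFGroup G := by
  intro x y hx hy hle
  refine le_antisymm hle (centralizer_le_of_mk_mem_zpowers ?_)
  rw [zpowers_mk_eq_of_centralizer_le hp hx hy (h x hx) hle]
  exact mem_zpowers _

lemma orderOf_eq_of_relIndex_eq_prime (hp : p.Prime)
    (h : ∀ x : G, x ∉ center G → (center G).relIndex (centerCentralizer x) = p)
    (a : G ⧸ center G) (ha : a ≠ 1) : orderOf a = p := by
  obtain ⟨x, rfl⟩ := mk_surjective a
  have hx : x ∉ center G := (eq_one_iff x).not.mp ha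
  exact orderOf_mk_eq hp hx (h x hx)

lemma injOn_centralizerPreimage (hp : p.Prime)
    (h : ∀ x : G, x ∉ center G → (center G).relIndex (centerCentralizer x) = p) :
    Set.InjOn centralizerPreimage (zpowers '' ({1}ᶜ : Set (G ⧸ center G))) := by
  rintro _ ⟨a, ha, rfl⟩ _ ⟨b, hb, rfl⟩ hab
  obtain ⟨x, rfl⟩ := mk_surjective a
  obtain ⟨y, rfl⟩ := mk_surjective b
  have hx : x ∉ center G := (eq_one_iff x).not.mp ha
  have hy : y ∉ center G := (eq_one_iff y).not.mp hb
  rw [centralizerPreimage_zpowers_mk, centralizerPreimage_zpowers_mk] at hab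
  exact (zpowers_mk_eq_of_centralizer_le hp hx hy (h x hx) hab.le).symm

lemma numCent_eq_ncard_add_one [Finite G] (hp : p.Prime)
    (h : ∀ x : G, x ∉ center G → (center G).relIndex (centerCentralizer x) = p) :
    numCent G = (zpowers '' ({1}ᶜ : Set (G ⧸ center G))).ncard + 1 := by
  rw [numCent, cent_eq_insert_top,
    Set.ncard_insert_of_notMem top_notMem_image_centralizerPreimage (Set.toFinite _),
    (injOn_centralizerPreimage hp h).ncard_image]

end RelIndexPrime

theorem stmt6 (G : Type*) [Group G] [Finite G] (p : ℕ) (hp : p.Prime)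
    (h : ∀ x : G, x ∉ Subgroup.center G →
      (Subgroup.center G).relIndex (centerCentralizer x) = p) :
    IsFGroup G ∧ (∀ a : G ⧸ Subgroup.center G, a ^ p = 1) ∧
      ∀ k : ℕ, (Subgroup.center G).index = p ^ k →
        numCent G = (p ^ k - 1) / (p - 1) + 1 := by
  have hord := orderOf_eq_of_relIndex_eq_prime hp h
  refine ⟨isFGroup_of_relIndex_eq_prime hp h, fun a => ?_, fun k hk => ?_⟩
  · rcases eq_or_ne a 1 with rfl | ha
    · exact one_pow p
    · exact hord a ha ▸ pow_orderOf_eq_one a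
  · have hcount := ncard_image_zpowers_mul hp hord
    rw [← index_eq_card, hk] at hcount
    rw [numCent_eq_ncard_add_one hp h, ← hcount,
      Nat.mul_div_cancel _ (Nat.sub_pos_of_lt hp.one_lt)]
end

section
/- Let G be a finite F-group with [G : Z(G)] = p^k (p prime), and suppose |Cent(G)| = (p^k − 1)/(p − 1) + 1. Then [Z(C(x)) : Z(G)] = p for every non-central x ∈ G. -/
/-!
In an F-group the subgroups `Z(C(x)) / Z(G)`, `x` non-central, partition `G / Z(G)`, and
`C(x) ↦ Z(C(x))` is injective on the `|Cent(G)| - 1` proper centralizers. Counting the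
non-trivial elements of `G / Z(G)` gives `∑ ([Z(C(x)) : Z(G)] - 1) = p ^ k - 1`, a sum of
`(p ^ k - 1) / (p - 1)` terms, each at least `p - 1` because `[Z(C(x)) : Z(G)]` is a
non-trivial power of `p`. Hence every term equals `p - 1`.
-/

namespace Subgroup

variable {G : Type*} [Group G]

theorem ncard_sdiff_eq_relIndex_sub_one_mul [Finite G] {Z H : Subgroup G} (h : Z ≤ H) :
    ((H : Set G) \ Z).ncard = (Z.relIndex H - 1) * Nat.card Z := by
  rw [Set.ncard_sdiff h, ← Nat.card_coe_set_eq, ← Nat.card_coe_set_eq, Nat.sub_one_mul,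
    SetLike.coe_sort_coe, SetLike.coe_sort_coe, ← relIndex_bot_left, ← relIndex_bot_left,
    ← relIndex_mul_relIndex ⊥ Z H bot_le h, mul_comm]

/-- `hdisj` and `hcover` say that the `H / Z`, `H ∈ T`, partition the non-trivial elements of
`G / Z`. -/
theorem sum_relIndex_sub_one_eq_index_sub_one [Finite G] {Z : Subgroup G}
    {T : Finset (Subgroup G)} (hle : ∀ H ∈ T, Z ≤ H)
    (hdisj : (T : Set (Subgroup G)).Pairwise fun H K => H ⊓ K ≤ Z)
    (hcover : ∀ g ∉ Z, ∃ H ∈ T, g ∈ H) :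
    ∑ H ∈ T, (Z.relIndex H - 1) = Z.index - 1 := by
  have hpd : (T : Set (Subgroup G)).PairwiseDisjoint fun H => (H : Set G) \ Z := by
    refine fun H hH K hK hne => Set.disjoint_left.2 fun g hgH hgK => hgH.2 ?_
    exact hdisj hH hK hne ⟨hgH.1, hgK.1⟩
  have hunion : (⋃ H ∈ (T : Set (Subgroup G)), (H : Set G) \ Z) = ((⊤ : Subgroup G) : Set G) \ Z := by
    ext g
    simp only [Set.mem_iUnion, Set.mem_sdiff, SetLike.mem_coe, mem_top, true_and,
      exists_and_right, exists_prop]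
    exact ⟨fun h => h.2, fun hg => ⟨hcover g hg, hg⟩⟩
  have hcount := T.finite_toSet.ncard_biUnion (fun _ _ => Set.toFinite _) hpd
  rw [hunion, finsum_mem_coe_finset, ncard_sdiff_eq_relIndex_sub_one_mul le_top, relIndex_top_right,
    Finset.sum_congr rfl fun H hH => ncard_sdiff_eq_relIndex_sub_one_mul (hle H hH),
    ← Finset.sum_mul] at hcount
  exact (Nat.eq_of_mul_eq_mul_right Nat.card_pos hcount).symm

theorem prime_le_relIndex {p k : ℕ} (hp : p.Prime) {Z H : Subgroup G} (hZH : Z ≤ H)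
    (hHZ : ¬H ≤ Z) (hk : Z.index = p ^ k) : p ≤ Z.relIndex H := by
  obtain ⟨j, -, hj⟩ := (Nat.dvd_prime_pow hp).1 (hk ▸ relIndex_dvd_index_of_le hZH)
  have hj0 : j ≠ 0 := by
    rintro rfl
    exact hHZ (relIndex_eq_one.1 hj)
  exact hj ▸ le_self_pow hp.one_le hj0

end Subgroup

open Subgroup

section CenterCentralizer

variable {G : Type*} [Group G]

lemma mem_centerCentralizer_self (x : G) : x ∈ centerCentralizer x :=
  ⟨mem_centralizer_singleton_iff.2 rfl, fun _ hh => mem_centralizer_singleton_iff.1 hh⟩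

lemma center_le_centerCentralizer (x : G) : center G ≤ centerCentralizer x :=
  le_inf (center_le_centralizer _) (center_le_centralizer _)

lemma centralizer_le_centralizer_of_mem_centerCentralizer {x g : G}
    (hg : g ∈ centerCentralizer x) : centralizer {x} ≤ centralizer ({g} : Set G) :=
  fun h hh => mem_centralizer_singleton_iff.2 (mem_centralizer_iff.1 hg.2 h hh)

variable (G) in
def centerCentralizers : Set (Subgroup G) := centerCentralizer '' {x | x ∉ center G}

variable (G) in
lemma numCent_eq_ncard_add_one_s7 [Finite G] :
    numCent G = ((fun x : G => centralizer {x}) '' {x | x ∉ center G}).ncard + 1 := by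
  have hcent : cent G = insert ⊤ ((fun x : G => centralizer {x}) '' {x | x ∉ center G}) := by
    ext H
    simp only [cent, Set.mem_range, Set.mem_insert_iff, Set.mem_image, Set.mem_ofPred_eq]
    constructor
    · rintro ⟨a, rfl⟩
      by_cases ha : a ∈ center G
      · exact .inl (centralizer_eq_top_iff_subset.2 (Set.singleton_subset_iff.2 ha))
      · exact .inr ⟨a, ha, rfl⟩
    · rintro (rfl | ⟨a, -, rfl⟩)
      · exact ⟨1, centralizer_eq_top_iff_subset.2 (Set.singleton_subset_iff.2 (one_mem _))⟩
      · exact ⟨a, rfl⟩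
  rw [numCent, hcent, Set.ncard_insert_of_notMem]
  rintro ⟨a, ha, hCa⟩
  exact ha (Set.singleton_subset_iff.1 (centralizer_eq_top_iff_subset.1 hCa))

namespace IsFGroup

variable (hF : IsFGroup G)
include hF

lemma centralizer_eq_of_mem_centerCentralizer {x g : G} (hx : x ∉ center G)
    (hg : g ∉ center G) (hmem : g ∈ centerCentralizer x) :
    centralizer ({x} : Set G) = centralizer {g} :=
  hF x g hx hg (centralizer_le_centralizer_of_mem_centerCentralizer hmem)

lemma inf_le_center_of_ne {H K : Subgroup G} (hH : H ∈ centerCentralizers G)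
    (hK : K ∈ centerCentralizers G) (hne : H ≠ K) : H ⊓ K ≤ center G := by
  obtain ⟨x, hx, rfl⟩ := hH
  obtain ⟨y, hy, rfl⟩ := hK
  refine fun g hg => by_contra fun hgZ => hne ?_
  unfold centerCentralizer
  rw [hF.centralizer_eq_of_mem_centerCentralizer hx hgZ hg.1,
    hF.centralizer_eq_of_mem_centerCentralizer hy hgZ hg.2]

lemma ncard_centerCentralizers_add_one [Finite G] :
    (centerCentralizers G).ncard + 1 = numCent G := by
  have himage : centerCentralizers G = (fun H : Subgroup G => H ⊓ centralizer (H : Set G)) ''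
      ((fun x : G => centralizer {x}) '' {x | x ∉ center G}) := by
    rw [centerCentralizers, Set.image_image]
    rfl
  have hinj : Set.InjOn (fun H : Subgroup G => H ⊓ centralizer (H : Set G))
      ((fun x : G => centralizer {x}) '' {x | x ∉ center G}) := by
    rintro _ ⟨a, ha, rfl⟩ _ ⟨b, hb, rfl⟩ heq
    have heq' : centerCentralizer a = centerCentralizer b := heq
    have hab : a ∈ centerCentralizer b := heq' ▸ mem_centerCentralizer_self a
    exact (hF.centralizer_eq_of_mem_centerCentralizer hb ha hab).symm
  rw [himage, hinj.ncard_image, numCent_eq_ncard_add_one_s7]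

end IsFGroup

end CenterCentralizer

theorem stmt7 (G : Type*) [Group G] [Finite G] (hF : IsFGroup G)
    (p k : ℕ) (hp : p.Prime) (hk : (Subgroup.center G).index = p ^ k)
    (hc : numCent G = (p ^ k - 1) / (p - 1) + 1) :
    ∀ x : G, x ∉ Subgroup.center G →
      (Subgroup.center G).relIndex (centerCentralizer x) = p := by
  intro x hx
  set T := (Set.toFinite (centerCentralizers G)).toFinset
  have hmemT {H} : H ∈ T ↔ H ∈ centerCentralizers G := Set.Finite.mem_toFinset _
  have hxT : centerCentralizer x ∈ T := hmemT.2 ⟨x, hx, rfl⟩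
  have hge : ∀ H ∈ T, p ≤ (center G).relIndex H := by
    intro H hH
    obtain ⟨y, hy, rfl⟩ := hmemT.1 hH
    exact prime_le_relIndex hp (center_le_centerCentralizer y)
      (fun h => hy (h (mem_centerCentralizer_self y))) hk
  have hsum : ∑ H ∈ T, ((center G).relIndex H - 1) = p ^ k - 1 := by
    refine hk ▸ sum_relIndex_sub_one_eq_index_sub_one ?_ ?_ ?_
    · exact fun H hH => by obtain ⟨y, -, rfl⟩ := hmemT.1 hH; exact center_le_centerCentralizer y
    · exact fun H hH K hK => hF.inf_le_center_of_ne (hmemT.1 hH) (hmemT.1 hK)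
    · exact fun g hg => ⟨_, hmemT.2 ⟨g, hg, rfl⟩, mem_centerCentralizer_self g⟩
  have hcard : T.card * (p - 1) = p ^ k - 1 := by
    rw [← Set.ncard_eq_toFinset_card, Nat.add_right_cancel_iff.1
      ((hF.ncard_centerCentralizers_add_one).trans hc)]
    exact Nat.div_mul_cancel (Nat.sub_one_dvd_pow_sub_one p k)
  have hterm := (Finset.sum_eq_sum_iff_of_le fun H hH => Nat.sub_le_sub_right (hge H hH) 1).1
    (by rw [Finset.sum_const, smul_eq_mul, hcard, hsum]) _ hxT
  have := hge _ hxT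
  have := hp.one_lt
  omega
end

section
/- Let G be a finite group in which the centralizer of every non-central element is a maximal subgroup of G, and suppose G is nilpotent. Then [G : C(x)] = p for all non-central x ∈ G for a single prime p, [G : Z(G)] = p^k for some k, and |Cent(G)| = (p^k − 1)/(p − 1) + 1 = number of z-classes of G. -/
/-!
Maximal subgroups of a nilpotent group are normal of prime index, so every `G ⧸ C(y)` is cyclic
of prime order and all commutators are central. Then `w ↦ ⁅x, w⁆` is a homomorphism with kernel
`C(x)`, so a nontrivial `⁅x, y⁆` has order `[G : C(x)]`; read from both sides, non-commuting
elements have centralizers of the same prime index `p`, and any two non-central elements are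
linked through an element commuting with neither. Hence `G ⧸ Z(G)` has exponent `p` and order
`p ^ k`. The centralizer `C(x)` depends only on the coset `x Z(G)`, and conversely determines the
subgroup generated by that coset (compare `⁅g, x⁆` and `⁅g, y⁆` in the cyclic group
`⁅g, G⁆` of order `p`), so the proper centralizers correspond to the `(p ^ k - 1) / (p - 1)`
subgroups of order `p` of `G ⧸ Z(G)`. All centralizers are normal, so z-classes are counted like
centralizers.
-/

open Subgroup
open scoped commutatorElement

section

variable {G : Type*} [Group G]

theorem Subgroup.isSimpleGroup_quotient_of_isCoatom {H : Subgroup G} [H.Normal]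
    (hH : IsCoatom H) : IsSimpleGroup (G ⧸ H) := by
  let e : Subgroup (G ⧸ H) ≃o Set.Ici H := QuotientGroup.comapMk'OrderIso H
  have : IsSimpleOrder (Subgroup (G ⧸ H)) :=
    e.isSimpleOrder_iff.mpr (Set.isSimpleOrder_Ici_iff_isCoatom.mpr hH)
  have : Nontrivial (G ⧸ H) := nontrivial_iff.mp inferInstance
  exact ⟨fun N _ => IsSimpleOrder.eq_bot_or_eq_top N⟩

theorem Subgroup.exists_notMem_of_ne_top_of_ne_top {H K : Subgroup G} (hH : H ≠ ⊤)
    (hK : K ≠ ⊤) : ∃ g, g ∉ H ∧ g ∉ K := by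
  obtain ⟨a, ha⟩ := SetLike.exists_not_mem_of_ne_top H hH
  obtain ⟨b, hb⟩ := SetLike.exists_not_mem_of_ne_top K hK
  by_cases haK : a ∈ K
  · by_cases hbH : b ∈ H
    · exact ⟨a * b, (H.mul_mem_cancel_right hbH).not.mpr ha,
        (K.mul_mem_cancel_left haK).not.mpr hb⟩
    · exact ⟨b, hbH, hb⟩
  · exact ⟨a, ha, haK⟩

theorem Subgroup.mem_centralizer_singleton_comm {g k : G} :
    k ∈ centralizer {g} ↔ g ∈ centralizer {k} := by
  simp only [mem_centralizer_singleton_iff, eq_comm]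

theorem Subgroup.centralizer_singleton_eq_of_inv_mul_mem_center {a b : G}
    (h : a⁻¹ * b ∈ center G) : centralizer {a} = centralizer {b} := by
  obtain ⟨z, hz, rfl⟩ : ∃ z ∈ center G, b = a * z := ⟨a⁻¹ * b, h, by group⟩
  ext w
  have hwz : Commute w z := mem_center_iff.mp hz w
  simp only [mem_centralizer_singleton_iff]
  refine ⟨fun hwa => (Commute.mul_right hwa hwz).eq, fun hwaz => ?_⟩
  simpa using (Commute.mul_right hwaz hwz.inv_right).eq

section Nilpotent

variable [Group.IsNilpotent G] {H : Subgroup G}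

theorem IsCoatom.normal_of_isNilpotent (hH : IsCoatom H) : H.Normal :=
  NormalizerCondition.normal_of_coatom H Group.normalizerCondition_of_isNilpotent hH

theorem IsCoatom.index_prime_of_isNilpotent (hH : IsCoatom H) : H.index.Prime := by
  have := hH.normal_of_isNilpotent
  have := isSimpleGroup_quotient_of_isCoatom hH
  exact IsSimpleGroup.prime_card

theorem IsCoatom.commutatorElement_mem_of_isNilpotent (hH : IsCoatom H) (g h : G) :
    ⁅g, h⁆ ∈ H := by
  have := hH.normal_of_isNilpotent
  have := isSimpleGroup_quotient_of_isCoatom hH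
  rw [← QuotientGroup.eq_one_iff, ← QuotientGroup.mk'_apply, map_commutatorElement,
    commutatorElement_eq_one_iff_commute]
  -- a simple nilpotent group is commutative
  exact mul_comm _ _

end Nilpotent

def commutatorHom (hZ : ∀ a b : G, ⁅a, b⁆ ∈ center G) (x : G) : G →* G where
  toFun w := ⁅x, w⁆
  map_one' := commutatorElement_one_right x
  map_mul' a b := by
    rw [commutatorElement_mul_right_eq_mul_conj, mul_assoc ⁅x, a⁆, mem_center_iff.mp (hZ x b) a]
    group

theorem ker_commutatorHom (hZ : ∀ a b : G, ⁅a, b⁆ ∈ center G) (x : G) :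
    (commutatorHom hZ x).ker = centralizer {x} := by
  ext w
  rw [MonoidHom.mem_ker, mem_centralizer_singleton_iff]
  exact commutatorElement_eq_one_iff_commute.trans ⟨Commute.symm, Commute.symm⟩

theorem orderOf_commutatorElement (hZ : ∀ a b : G, ⁅a, b⁆ ∈ center G) {x g : G}
    (hx : (centralizer {x}).index.Prime) (hg : g ∉ centralizer {x}) :
    orderOf ⁅x, g⁆ = (centralizer {x}).index := by
  have hdvd : orderOf ⁅x, g⁆ ∣ (centralizer {x}).index := by
    rw [← ker_commutatorHom hZ, index_ker]
    exact orderOf_dvd_natCard _ ⟨g, rfl⟩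
  refine (hx.eq_one_or_self_of_dvd _ hdvd).resolve_left fun h => hg ?_
  rw [← ker_commutatorHom hZ]
  exact orderOf_eq_one_iff.mp h

def HasMaximalCentralizers (G : Type*) [Group G] : Prop :=
  ∀ x : G, x ∉ center G → IsCoatom (centralizer ({x} : Set G))

def centralizerOfCoset : G ⧸ center G → Subgroup G :=
  Quotient.lift (fun y => centralizer {y}) fun _ _ h =>
    centralizer_singleton_eq_of_inv_mul_mem_center (QuotientGroup.leftRel_apply.mp h)

theorem ncard_range_of_fibers_eq_zpowers {Q β : Type*} [Group Q] [Finite Q] {p : ℕ}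
    (hp : p.Prime) (hexp : ∀ v : Q, v ^ p = 1) (f : Q → β)
    (hfib : ∀ v w : Q, v ≠ 1 → (f w = f v ↔ w ≠ 1 ∧ w ∈ zpowers v)) :
    (Set.range f).ncard = (Nat.card Q - 1) / (p - 1) + 1 := by
  classical
  have := Fintype.ofFinite Q
  have := Fact.mk hp
  set s : Finset Q := Finset.univ.erase 1
  have hfiber : ∀ v : Q, v ≠ 1 → {w ∈ s | f w = f v}.card = p - 1 := by
    intro v hv
    have : {w ∈ s | f w = f v} = (zpowers v : Set Q).toFinset.erase 1 := by
      ext w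
      simp [s, hfib v w hv]
    rw [this, Finset.card_erase_of_mem (by simp), ← Nat.card_eq_card_toFinset,
      SetLike.coe_sort_coe, Nat.card_zpowers, orderOf_eq_prime (hexp v) hv]
  have hcount : (s.image f).card * (p - 1) = Nat.card Q - 1 := by
    have hs : s.card = Nat.card Q - 1 := by simp [s, Nat.card_eq_fintype_card]
    rw [← hs, Finset.card_eq_sum_card_fiberwise fun w hw => Finset.mem_image_of_mem f hw]
    refine (Finset.sum_const_nat fun b hb => ?_).symm
    obtain ⟨v, hv, rfl⟩ := Finset.mem_image.mp hb
    exact hfiber v (Finset.ne_of_mem_erase hv)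
  have hone : f 1 ∉ f '' {1}ᶜ := by
    rintro ⟨v, hv, h⟩
    exact ((hfib v 1 hv).mp h.symm).1 rfl
  have himage : f '' {1}ᶜ = ↑(s.image f) := by
    ext b
    simp [s]
  rw [← Set.insert_image_compl_eq_range f 1, Set.ncard_insert_of_notMem hone, himage,
    Set.ncard_coe_finset, ← hcount, Nat.mul_div_cancel _ (Nat.sub_pos_of_lt hp.one_lt)]

theorem conjugates_eq_singleton {H : Subgroup G} [H.Normal] : conjugates H = {H} := by
  ext K
  simp only [conjugates, Set.mem_ofPred_eq, Set.mem_singleton_iff]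
  exact ⟨fun ⟨g, hK⟩ => hK.trans (Normal.map_conj_eq H g),
    fun hK => ⟨1, hK.trans (Normal.map_conj_eq H 1).symm⟩⟩

theorem numZClasses_eq_numCent (hN : ∀ x : G, (centralizer {x}).Normal) :
    numZClasses G = numCent G := by
  have : (fun x : G => conjugates (centralizer {x})) =
      (fun H => {H}) ∘ fun x : G => centralizer {x} :=
    funext fun x => have := hN x; conjugates_eq_singleton
  rw [numZClasses, numCent, cent, this, Set.range_comp,
    Set.ncard_image_of_injective _ Set.singleton_injective]

namespace HasMaximalCentralizers

variable [Group.IsNilpotent G]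

theorem centralizer_normal (hmax : HasMaximalCentralizers G) (x : G) :
    (centralizer {x}).Normal := by
  by_cases hx : x ∈ center G
  · rw [centralizer_eq_top_iff_subset.mpr (Set.singleton_subset_iff.mpr hx)]
    infer_instance
  · exact (hmax x hx).normal_of_isNilpotent

theorem commutatorElement_mem_center (hmax : HasMaximalCentralizers G) (g h : G) :
    ⁅g, h⁆ ∈ center G := by
  refine mem_center_iff.mpr fun y => ?_
  by_cases hy : y ∈ center G
  · exact (mem_center_iff.mp hy _).symm
  · exact (mem_centralizer_singleton_iff.mp
      ((hmax y hy).commutatorElement_mem_of_isNilpotent g h)).symm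

theorem index_centralizer_eq_of_not_commute (hmax : HasMaximalCentralizers G) {x y : G}
    (hxy : ¬Commute x y) :
    (centralizer {x}).index = (centralizer {y}).index := by
  have hx : x ∉ center G := fun hx => hxy (mem_center_iff.mp hx y).symm
  have hy : y ∉ center G := fun hy => hxy (mem_center_iff.mp hy x)
  rw [← orderOf_commutatorElement hmax.commutatorElement_mem_center
      (hmax x hx).index_prime_of_isNilpotent fun h => hxy (mem_centralizer_singleton_iff.mp h).symm,
    ← orderOf_commutatorElement hmax.commutatorElement_mem_center
      (hmax y hy).index_prime_of_isNilpotent fun h => hxy (mem_centralizer_singleton_iff.mp h),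
    ← commutatorElement_inv, orderOf_inv]

theorem index_centralizer_eq (hmax : HasMaximalCentralizers G) {x y : G} (hx : x ∉ center G)
    (hy : y ∉ center G) :
    (centralizer {x}).index = (centralizer {y}).index := by
  obtain ⟨g, hgx, hgy⟩ := exists_notMem_of_ne_top_of_ne_top (hmax x hx).1 (hmax y hy).1
  rw [hmax.index_centralizer_eq_of_not_commute (y := g)
      fun h => hgx (mem_centralizer_singleton_iff.mpr h.eq.symm),
    hmax.index_centralizer_eq_of_not_commute fun h => hgy (mem_centralizer_singleton_iff.mpr h.eq)]

theorem exists_prime_index_centralizer (hmax : HasMaximalCentralizers G) :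
    ∃ p : ℕ, p.Prime ∧ ∀ x : G, x ∉ center G → (centralizer {x}).index = p := by
  by_cases h : ∃ x₀ : G, x₀ ∉ center G
  · obtain ⟨x₀, hx₀⟩ := h
    exact ⟨_, (hmax x₀ hx₀).index_prime_of_isNilpotent,
      fun x hx => hmax.index_centralizer_eq hx hx₀⟩
  · push Not at h
    exact ⟨2, Nat.prime_two, fun x hx => absurd (h x) hx⟩

theorem pow_eq_one_of_index_centralizer_eq (hmax : HasMaximalCentralizers G) {p : ℕ}
    (hp : ∀ x : G, x ∉ center G → (centralizer {x}).index = p) (v : G ⧸ center G) :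
    v ^ p = 1 := by
  induction v using QuotientGroup.induction_on with | H g => ?_
  rw [← QuotientGroup.mk_pow, QuotientGroup.eq_one_iff]
  refine mem_center_iff.mpr fun y => ?_
  by_cases hy : y ∈ center G
  · exact (mem_center_iff.mp hy _).symm
  · have := hmax.centralizer_normal y
    have hgp := pow_index_mem (centralizer {y}) g
    rw [hp y hy] at hgp
    exact (mem_centralizer_singleton_iff.mp hgp).symm

theorem exists_zpow_inv_mul_mem_center (hmax : HasMaximalCentralizers G) {x y : G}
    (hx : x ∉ center G) (hxy : centralizer {y} = centralizer {x}) :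
    ∃ m : ℤ, (x ^ m)⁻¹ * y ∈ center G := by
  have hZ := hmax.commutatorElement_mem_center
  obtain ⟨g, hg⟩ := SetLike.exists_not_mem_of_ne_top _ (hmax x hx).1
  have hgZ : g ∉ center G := fun h => hg (center_le_centralizer _ h)
  have hxg : x ∉ centralizer {g} := fun h => hg (mem_centralizer_singleton_comm.mp h)
  have hprime := (hmax g hgZ).index_prime_of_isNilpotent
  set φ := commutatorHom hZ g
  have hcard : Nat.card φ.range = (centralizer {g}).index := by
    rw [← index_ker, ker_commutatorHom]
  have : Finite φ.range := Nat.finite_of_card_ne_zero (hcard ▸ hprime.ne_zero)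
  have hrange : zpowers (φ x) = φ.range := by
    refine eq_of_le_of_card_ge (zpowers_le.mpr ⟨x, rfl⟩) ?_
    rw [hcard, Nat.card_zpowers]
    exact (orderOf_commutatorElement hZ hprime hxg).ge
  obtain ⟨m, hm⟩ := mem_zpowers_iff.mp (hrange ▸ ⟨y, rfl⟩ : φ y ∈ zpowers (φ x))
  refine ⟨m, by_contra fun hu => hg ?_⟩
  have hug : (x ^ m)⁻¹ * y ∈ centralizer {g} := by
    rw [← ker_commutatorHom hZ, MonoidHom.mem_ker, map_mul, map_inv, map_zpow, hm, inv_mul_cancel]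
  have hle : centralizer {x} ≤ centralizer {(x ^ m)⁻¹ * y} := fun w hw =>
    have hwx : Commute w x := mem_centralizer_singleton_iff.mp hw
    have hwy : Commute w y := mem_centralizer_singleton_iff.mp (hxy ▸ hw)
    mem_centralizer_singleton_iff.mpr ((hwx.zpow_right m).inv_right.mul_right hwy).eq
  rw [← ((hmax x hx).le_iff.mp hle).resolve_left (hmax _ hu).1]
  exact mem_centralizer_singleton_comm.mp hug

theorem centralizerOfCoset_eq_iff (hmax : HasMaximalCentralizers G) {v w : G ⧸ center G}
    (hv : v ≠ 1) :
    centralizerOfCoset w = centralizerOfCoset v ↔ w ≠ 1 ∧ w ∈ zpowers v := by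
  induction v using QuotientGroup.induction_on with | H x => ?_
  induction w using QuotientGroup.induction_on with | H y => ?_
  have hx : x ∉ center G := fun h => hv ((QuotientGroup.eq_one_iff x).mpr h)
  change centralizer {y} = centralizer {x} ↔ _
  rw [Ne, QuotientGroup.eq_one_iff]
  constructor
  · intro h
    refine ⟨fun hy => (hmax x hx).1 (h.symm.trans
      (centralizer_eq_top_iff_subset.mpr (Set.singleton_subset_iff.mpr hy))), ?_⟩
    obtain ⟨m, hm⟩ := hmax.exists_zpow_inv_mul_mem_center hx h
    exact mem_zpowers_iff.mpr
      ⟨m, (QuotientGroup.mk_zpow _ x m).symm.trans (QuotientGroup.eq.mpr hm)⟩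
  · rintro ⟨hy, hyx⟩
    obtain ⟨m, hm⟩ := mem_zpowers_iff.mp hyx
    have hle : centralizer {x} ≤ centralizer {y} := by
      rw [← centralizer_singleton_eq_of_inv_mul_mem_center
        (QuotientGroup.eq.mp ((QuotientGroup.mk_zpow _ x m).trans hm))]
      exact fun w hw => mem_centralizer_singleton_iff.mpr
        (Commute.zpow_right (mem_centralizer_singleton_iff.mp hw) m).eq
    exact ((hmax x hx).le_iff.mp hle).resolve_left (hmax y hy).1

end HasMaximalCentralizers

end

theorem stmt14 (G : Type*) [Group G] [Finite G] [Group.IsNilpotent G]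
    (hmax : ∀ x : G, x ∉ Subgroup.center G →
      IsCoatom (Subgroup.centralizer ({x} : Set G))) :
    ∃ (p k : ℕ), p.Prime ∧
      (∀ x : G, x ∉ Subgroup.center G → (Subgroup.centralizer {x}).index = p) ∧
      (Subgroup.center G).index = p ^ k ∧
      numCent G = (p ^ k - 1) / (p - 1) + 1 ∧
      numZClasses G = (p ^ k - 1) / (p - 1) + 1 := by
  replace hmax : HasMaximalCentralizers G := hmax
  obtain ⟨p, hp, hindex⟩ := hmax.exists_prime_index_centralizer
  have := Fact.mk hp
  have hexp := hmax.pow_eq_one_of_index_centralizer_eq hindex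
  obtain ⟨k, hk⟩ := IsPGroup.exists_card_eq (p := p) (G := G ⧸ center G)
    fun v => ⟨1, by rw [pow_one, hexp v]⟩
  have hcent : numCent G = (p ^ k - 1) / (p - 1) + 1 := by
    have hrange : cent G = Set.range centralizerOfCoset :=
      QuotientGroup.mk_surjective.range_comp centralizerOfCoset
    rw [numCent, hrange, ← hk]
    exact ncard_range_of_fibers_eq_zpowers hp hexp _ fun v w hv =>
      hmax.centralizerOfCoset_eq_iff hv
  refine ⟨p, k, hp, hindex, (index_eq_card _).trans hk, hcent, ?_⟩
  rw [numZClasses_eq_numCent hmax.centralizer_normal, hcent]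
end
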